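/- The triple self-shuffle ⋃_{w ∈ {0,1}*} (w ∐ w ∐ w) is not context-free. -/

import Mathlib

/-- `IsShuffle x y z` means `z` is an interleaving of `x` and `y`, preserving
the relative order of the letters of each; i.e. `z ∈ x ∐ y` (ordinary shuffle). -/
inductive IsShuffle {α : Type*} : List α → List α → List α → Prop
  | nil : IsShuffle [] [] []
  | left {x y z : List α} (a : α) : IsShuffle x y z → IsShuffle (a :: x) y (a :: z)
  | right {x y z : List α} (a : α) : IsShuffle x y z → IsShuffle x (a :: y) (a :: z)

namespace TSS

variable {T : Type}

inductive PT (T N : Type) : Type where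
  | leaf (t : T)
  | node (A : N) (cs : List (PT T N))

namespace PT
variable {N : Type}

def root : PT T N → Symbol T N
  | .leaf t => .terminal t
  | .node A _ => .nonterminal A

mutual
def yield : PT T N → List T
  | .leaf t => [t]
  | .node _ cs => yields cs
def yields : List (PT T N) → List T
  | [] => []
  | c :: cs => yield c ++ yields cs
end

mutual
def size : PT T N → ℕ
  | .leaf _ => 1
  | .node _ cs => sizes cs + 1
def sizes : List (PT T N) → ℕ
  | [] => 0
  | c :: cs => size c + sizes cs
end

mutual
def height : PT T N → ℕ
  | .leaf _ => 0
  | .node _ cs => heights cs + 1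
def heights : List (PT T N) → ℕ
  | [] => 0
  | c :: cs => max (height c) (heights cs)
end

lemma yields_append (l r : List (PT T N)) :
    yields (l ++ r) = yields l ++ yields r := by
  induction l with
  | nil => simp [yields]
  | cons c cs ih => simp [yields, ih]

lemma sizes_append (l r : List (PT T N)) :
    sizes (l ++ r) = sizes l + sizes r := by
  induction l with
  | nil => simp [sizes]
  | cons c cs ih => simp [sizes, ih, Nat.add_assoc]

lemma size_pos (t : PT T N) : 1 ≤ size t := by
  cases t <;> simp [size]

lemma size_le_sizes {c : PT T N} {cs : List (PT T N)} (h : c ∈ cs) :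
    size c ≤ sizes cs := by
  induction cs with
  | nil => simp at h
  | cons d ds ih =>
    rcases List.mem_cons.mp h with rfl | h
    · simp [sizes]
    · have := ih h; simp [sizes]; omega

lemma size_lt_of_mem {c : PT T N} {A : N} {cs : List (PT T N)} (h : c ∈ cs) :
    size c < size (.node A cs) := by
  have := size_le_sizes h; simp [size]; omega

lemma height_le_heights {c : PT T N} {cs : List (PT T N)} (h : c ∈ cs) :
    height c ≤ heights cs := by
  induction cs with
  | nil => simp at h
  | cons d ds ih =>
    rcases List.mem_cons.mp h with rfl | h
    · simp [heights]
    · have := ih h; simp [heights]; omega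

lemma exists_height_eq_heights {cs : List (PT T N)} (h : cs ≠ []) :
    ∃ c ∈ cs, height c = heights cs := by
  induction cs with
  | nil => simp at h
  | cons d ds ih =>
    rcases List.eq_nil_or_concat ds with rfl | hne
    · exact ⟨d, by simp, by simp [heights]⟩
    · have hds : ds ≠ [] := by rcases hne with ⟨a, b, rfl⟩; simp
      rcases ih hds with ⟨c, hc, hc2⟩
      rcases Nat.le_total (heights ds) (height d) with hle | hle
      · exact ⟨d, by simp, by simp [heights]; omega⟩
      · exact ⟨c, by simp [hc], by simp [heights]; omega⟩

end PT

open PT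

variable {g : ContextFreeGrammar T}

/-- Validity of a parse tree w.r.t. a grammar. -/
inductive Valid (g : ContextFreeGrammar T) : PT T g.NT → Prop
  | leaf (t : T) : Valid g (.leaf t)
  | node (A : g.NT) (cs : List (PT T g.NT)) (r : ContextFreeRule T g.NT)
      (hr : r ∈ g.rules) (hA : r.input = A) (ho : r.output = cs.map root)
      (hc : ∀ c ∈ cs, Valid g c) : Valid g (.node A cs)

lemma derives_yields {cs : List (PT T g.NT)}
    (h : ∀ c ∈ cs, g.Derives [root c] ((yield c).map Symbol.terminal)) :
    g.Derives (cs.map root) ((yields cs).map Symbol.terminal) := by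
  induction cs with
  | nil => simp only [List.map_nil, yields]; rfl
  | cons c cs ih =>
    have h1 := h c (by simp)
    have h2 := ih (fun c hc => h c (by simp [hc]))
    have : g.Derives ([root c] ++ cs.map root)
        ((yield c).map Symbol.terminal ++ (yields cs).map Symbol.terminal) :=
      (h1.append_right _).trans (h2.append_left _)
    simpa [yields] using this

lemma Valid.derives {t : PT T g.NT} (h : Valid g t) :
    g.Derives [root t] ((yield t).map Symbol.terminal) := by
  induction h with
  | leaf t => simp only [root, yield, List.map_cons, List.map_nil]; rfl
  | node A cs r hr hA ho hc ih =>
    have h1 : g.Produces [root (.node A cs : PT T g.NT)] (cs.map root) := by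
      refine ⟨r, hr, ?_⟩
      have := ContextFreeRule.Rewrites.input_output (r := r)
      rw [ho] at this
      simpa [root, hA] using this
    exact h1.trans_derives (by simpa [yield] using derives_yields ih)

lemma exists_forest {s : List (Symbol T g.NT)} {w : List T}
    (h : g.Derives s (w.map Symbol.terminal)) :
    ∃ ts : List (PT T g.NT), (∀ c ∈ ts, Valid g c) ∧ ts.map root = s ∧ yields ts = w := by
  induction h using Relation.ReflTransGen.head_induction_on with
  | refl =>
    refine ⟨w.map .leaf, by intro c hc; simp at hc; obtain ⟨t, _, rfl⟩ := hc; exact .leaf t,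
      by simp [root], ?_⟩
    induction w with
    | nil => simp [yields]
    | cons a w ih => simpa [yields, yield] using ih
  | head hp _ ih =>
    obtain ⟨ts, hval, hroot, hy⟩ := ih
    obtain ⟨r, hr, hrw⟩ := hp
    obtain ⟨p, q, hpq, hv⟩ := hrw.exists_parts
    rw [hv, List.append_assoc] at hroot
    obtain ⟨t1, t23, ht1t, hp1, hrest⟩ := List.map_eq_append_iff.mp hroot
    obtain ⟨t2, t3, ht23, hp2, hp3⟩ := List.map_eq_append_iff.mp hrest
    subst ht1t ht23
    refine ⟨t1 ++ (.node r.input t2) :: t3, ?_, ?_, ?_⟩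
    · intro c hc
      rcases List.mem_append.mp hc with hc | hc
      · exact hval c (by simp [hc])
      · rcases List.mem_cons.mp hc with rfl | hc
        · exact .node _ _ r hr rfl hp2.symm (fun c hc => hval c (by simp [hc]))
        · exact hval c (by simp [hc])
    · simp [hpq, hp1, hp3, root]
    · rw [← hy]
      simp [yields_append, yields, yield]
    
lemma exists_tree {A : g.NT} {w : List T}
    (h : g.Derives [Symbol.nonterminal A] (w.map Symbol.terminal)) :
    ∃ t : PT T g.NT, Valid g t ∧ root t = Symbol.nonterminal A ∧ yield t = w := by
  obtain ⟨ts, hval, hroot, hy⟩ := exists_forest h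
  obtain ⟨t, rfl⟩ := List.length_eq_one_iff.mp
    (by simpa using congrArg List.length hroot)
  exact ⟨t, hval t (by simp), by simpa using hroot, by simpa [yields] using hy⟩

/-- `s` occurs as a subtree of `t` with terminal context `U`, `Y`;
we also record a substitution property and validity inheritance. -/
def SubAt (g : ContextFreeGrammar T) (t s : PT T g.NT) (U Y : List T) : Prop :=
  yield t = U ++ yield s ++ Y ∧
  (Valid g t → Valid g s) ∧
  ∀ s' : PT T g.NT, root s' = root s → Valid g s' → Valid g t →
    ∃ t', Valid g t' ∧ root t' = root t ∧ yield t' = U ++ yield s' ++ Y ∧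
      size t' + size s = size t + size s'

lemma subAt_refl (t : PT T g.NT) : SubAt g t t [] [] := by
  refine ⟨by simp, id, fun s' hr hv _ => ⟨s', hv, hr, by simp, by omega⟩⟩

lemma subAt_child {A : g.NT} {cs l r : List (PT T g.NT)} {c : PT T g.NT}
    (h : cs = l ++ c :: r) :
    SubAt g (.node A cs) c (yields l) (yields r) := by
  subst h
  refine ⟨by simp [yield, yields_append, yields], ?_, ?_⟩
  · rintro (_ | ⟨A, cs, r0, hr, hA, ho, hc⟩)
    exact hc c (by simp)
  · intro s' hroot hs' hval
    rcases hval with _ | ⟨A, cs, r0, hr, hA, ho, hc⟩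
    refine ⟨.node A (l ++ s' :: r), ?_, rfl, ?_, ?_⟩
    · refine .node A _ r0 hr hA ?_ ?_
      · rw [ho]; simp [hroot]
      · intro d hd
        rcases List.mem_append.mp hd with hd | hd
        · exact hc d (by simp [hd])
        · rcases List.mem_cons.mp hd with rfl | hd
          · exact hs'
          · exact hc d (by simp [hd])
    · simp [yield, yields_append, yields]
    · simp only [size, sizes_append, sizes]
      omega

lemma subAt_trans {t s s₂ : PT T g.NT} {U Y V X : List T}
    (h1 : SubAt g t s U Y) (h2 : SubAt g s s₂ V X) :
    SubAt g t s₂ (U ++ V) (X ++ Y) := by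
  obtain ⟨hy1, hv1, hs1⟩ := h1
  obtain ⟨hy2, hv2, hs2⟩ := h2
  refine ⟨by rw [hy1, hy2]; simp, fun h => hv2 (hv1 h), ?_⟩
  intro s' hroot hval hvt
  obtain ⟨m, hmv, hmr, hmy, hms⟩ := hs2 s' hroot hval (hv1 hvt)
  obtain ⟨t', ht'v, ht'r, ht'y, ht's⟩ := hs1 m hmr hmv hvt
  refine ⟨t', ht'v, ht'r, by rw [ht'y, hmy]; simp, by omega⟩

/-- Maximal length of a rule output, plus 2. -/
def M (g : ContextFreeGrammar T) : ℕ := (g.rules.sup fun r => r.output.length) + 2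

lemma yields_length_le {cs : List (PT T g.NT)} {B : ℕ}
    (h : ∀ c ∈ cs, (yield c).length ≤ B) :
    (yields cs).length ≤ cs.length * B := by
  induction cs with
  | nil => simp [yields]
  | cons c cs ih =>
    have h1 := h c (by simp)
    have h2 := ih fun d hd => h d (by simp [hd])
    simp only [yields, List.length_append, List.length_cons]
    calc (yield c).length + (yields cs).length ≤ B + cs.length * B := by omega
    _ = (cs.length + 1) * B := by ring

lemma yield_length_le {t : PT T g.NT} (h : Valid g t) :
    (yield t).length ≤ M g ^ height t := by
  induction h with
  | leaf t => simp [yield, height]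
  | node A cs r hr hA ho hc ih =>
    have hM1 : 1 ≤ M g := by simp [M]
    have hlen : ∀ c ∈ cs, (yield c).length ≤ M g ^ heights cs := by
      intro c hcmem
      exact (ih c hcmem).trans (Nat.pow_le_pow_right hM1 (height_le_heights hcmem))
    have h1 : (yields cs).length ≤ cs.length * M g ^ heights cs := yields_length_le hlen
    have h2 : cs.length ≤ M g := by
      have h3 : r.output.length ≤ g.rules.sup fun r => r.output.length :=
        Finset.le_sup (f := fun r => r.output.length) hr
      have hco : r.output.length = cs.length := by rw [ho]; simp
      simp only [M]; omega
    calc (yield (.node A cs)).length = (yields cs).length := by simp [yield]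
    _ ≤ cs.length * M g ^ heights cs := h1
    _ ≤ M g * M g ^ heights cs := Nat.mul_le_mul_right _ h2
    _ = M g ^ (heights cs + 1) := by ring
    _ = M g ^ height (.node A cs) := by simp [height]

/-- Auxiliary relation for the pigeonhole chain. -/
def Rel (g : ContextFreeGrammar T) (a b : PT T g.NT) : Prop :=
  (∃ U Y, SubAt g a b U Y) ∧ size b < size a ∧ Valid g b ∧ 1 ≤ height b

lemma rel_trans {a b c : PT T g.NT} (h1 : Rel g a b) (h2 : Rel g b c) : Rel g a c := by
  obtain ⟨⟨U, Y, hUY⟩, hs, hv, hh⟩ := h1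
  obtain ⟨⟨V, X, hVX⟩, hs2, hv2, hh2⟩ := h2
  exact ⟨⟨U ++ V, X ++ Y, subAt_trans hUY hVX⟩, by omega, hv2, hh2⟩

lemma internal_label {t : PT T g.NT} (hv : Valid g t) (hh : 1 ≤ height t) :
    ∃ r ∈ g.rules, root t = Symbol.nonterminal r.input := by
  rcases hv with _ | ⟨A, cs, r, hr, hA, ho, hc⟩
  · simp [height] at hh
  · exact ⟨r, hr, by simp [root, hA]⟩

lemma chain_lemma : ∀ (h : ℕ) (t : PT T g.NT), Valid g t → height t = h → 1 ≤ h →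
    ∃ l : List (PT T g.NT), List.Chain (Rel g) t l ∧ l.length + 1 = h := by
  intro h
  induction h with
  | zero => omega
  | succ n ih =>
    intro t ht hht _
    rcases Nat.eq_zero_or_pos n with rfl | hn
    · exact ⟨[], List.Chain.nil, rfl⟩
    · -- t must be a node with a child of height n ≥ 1
      rcases t with t | ⟨A, cs⟩
      · simp [height] at hht
      · have hcs : heights cs = n := by simp [height] at hht; omega
        have hne : cs ≠ [] := by
          rintro rfl; simp [heights] at hcs; omega
        obtain ⟨c, hcmem, hch⟩ := PT.exists_height_eq_heights hne
        have hcval : Valid g c := by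
          rcases ht with _ | ⟨A, cs, r, hr, hA, ho, hc2⟩
          exact hc2 c hcmem
        obtain ⟨l', hl'c, hl'len⟩ := ih c hcval (by omega) (by omega)
        obtain ⟨l₁, l₂, rfl⟩ := List.append_of_mem hcmem
        refine ⟨c :: l', List.Chain.cons ?_ hl'c, by simp; omega⟩
        exact ⟨⟨yields l₁, yields l₂, subAt_child rfl⟩,
          size_lt_of_mem hcmem, hcval, by omega⟩

lemma descend : ∀ (n : ℕ) (t : PT T g.NT) (k : ℕ), Valid g t → height t = n → k + 1 ≤ n →
    ∃ (s : PT T g.NT) (U Y : List T), SubAt g t s U Y ∧ Valid g s ∧ height s = k + 1 := by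
  intro n
  induction n using Nat.strong_induction_on with
  | _ n ih =>
    intro t k ht hht hk
    rcases Nat.lt_or_ge (k + 1) n with hlt | hge
    · -- descend into tallest child
      rcases t with t | ⟨A, cs⟩
      · simp [height] at hht; omega
      · have hcs : heights cs = n - 1 := by simp [height] at hht; omega
        have hne : cs ≠ [] := by rintro rfl; simp [heights] at hcs; omega
        obtain ⟨c, hcmem, hch⟩ := PT.exists_height_eq_heights hne
        have hcval : Valid g c := by
          rcases ht with _ | ⟨A, cs, r, hr, hA, ho, hc2⟩
          exact hc2 c hcmem
        obtain ⟨s, U, Y, hsub, hsv, hsh⟩ := ih (n-1) (by omega) c k hcval (by omega) (by omega)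
        obtain ⟨l₁, l₂, rfl⟩ := List.append_of_mem hcmem
        exact ⟨s, yields l₁ ++ U, Y ++ yields l₂,
          subAt_trans (subAt_child rfl) hsub, hsv, hsh⟩
    · exact ⟨t, [], [], subAt_refl t, ht, by omega⟩

/-- Number of distinct rule inputs. -/
noncomputable def Kof (g : ContextFreeGrammar T) : ℕ :=
  letI := Classical.decEq g.NT
  (g.rules.image (·.input)).card

lemma rep2 {s : PT T g.NT} (hs : Valid g s)
    (hh : height s = Kof g + 1) :
    ∃ (t₁ t₂ : PT T g.NT) (U Y V X : List T) (A : g.NT),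
      SubAt g s t₁ U Y ∧ SubAt g t₁ t₂ V X ∧
      root t₁ = Symbol.nonterminal A ∧ root t₂ = Symbol.nonterminal A ∧
      size t₂ < size t₁ ∧ Valid g t₁ ∧ Valid g t₂ := by
  classical
  obtain ⟨l, hchain, hlen⟩ := chain_lemma (Kof g + 1) s hs hh (by omega)
  letI : IsTrans (PT T g.NT) (Rel g) := ⟨fun _ _ _ => rel_trans⟩
  have hpw : List.Pairwise (Rel g) (s :: l) := hchain.pairwise
  -- all elements valid with height ≥ 1
  have haux : ∀ (a : PT T g.NT) (m : List (PT T g.NT)), List.Chain (Rel g) a m →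
      ∀ x ∈ m, Valid g x ∧ 1 ≤ height x := by
    intro a m h
    induction m generalizing a with
    | nil => simp
    | cons b m ih =>
      obtain ⟨hab, hc⟩ := List.isChain_cons_cons.mp h
      intro x hx
      rcases List.mem_cons.mp hx with rfl | hx
      · exact ⟨hab.2.2.1, hab.2.2.2⟩
      · exact ih b hc x hx
  have hmemprop : ∀ x ∈ s :: l, Valid g x ∧ 1 ≤ height x := by
    intro x hx
    rcases List.mem_cons.mp hx with rfl | hx
    · exact ⟨hs, by omega⟩
    · exact haux s l hchain x hx
  -- labels live in a finset of size K
  set F : Finset (Symbol T g.NT) := (g.rules.image (·.input)).image Symbol.nonterminal with hF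
  have hFcard : F.card ≤ Kof g := by
    simpa [Kof] using Finset.card_image_le (s := g.rules.image (·.input)) (f := Symbol.nonterminal)
  have hmemF : ∀ x ∈ (s :: l).map root, x ∈ F := by
    intro x hx
    rcases List.mem_map.mp hx with ⟨y, hy, rfl⟩
    obtain ⟨hyv, hyh⟩ := hmemprop y hy
    obtain ⟨r, hr, hroot⟩ := internal_label hyv hyh
    rw [hroot]
    exact Finset.mem_image_of_mem _ (Finset.mem_image_of_mem _ hr)
  have hnodup : ¬((s :: l).map root).Nodup := by
    intro hnd
    have h1 : ((s :: l).map root).toFinset.card = ((s :: l).map root).length :=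
      List.toFinset_card_of_nodup hnd
    have h2 : ((s :: l).map root).toFinset ⊆ F := fun x hx =>
      hmemF x (List.mem_toFinset.mp hx)
    have := Finset.card_le_card h2
    simp only [List.length_map, List.length_cons] at h1
    omega
  obtain ⟨x, hdup⟩ := List.exists_duplicate_iff_not_nodup.mpr hnodup
  have hsub2 : List.Sublist [x, x] ((s :: l).map root) := List.duplicate_iff_sublist.mp hdup
  obtain ⟨pair, hpairsub, hpairmap⟩ := List.sublist_map_iff.mp hsub2
  rcases pair with _ | ⟨t₁, _ | ⟨t₂, _ | _⟩⟩ <;> simp at hpairmap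
  obtain ⟨hx1, hx2⟩ := hpairmap
  have hrel12 : Rel g t₁ t₂ := by
    have := hpw.sublist hpairsub
    simpa using this
  have ht₁mem : t₁ ∈ s :: l := hpairsub.subset (by simp)
  have hsubAt1 : ∃ U Y, SubAt g s t₁ U Y := by
    rcases List.mem_cons.mp ht₁mem with rfl | hmem
    · exact ⟨[], [], subAt_refl _⟩
    · exact ((List.pairwise_cons.mp hpw).1 t₁ hmem).1
  obtain ⟨U, Y, hsubAt1⟩ := hsubAt1
  obtain ⟨ht₁v, ht₁h⟩ := hmemprop t₁ ht₁mem
  obtain ⟨r, hr, hroot1⟩ := internal_label ht₁v ht₁h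
  obtain ⟨V, X, hsubAt2⟩ := hrel12.1
  exact ⟨t₁, t₂, U, Y, V, X, r.input, hsubAt1, hsubAt2, hroot1,
    (hx2.symm.trans hx1).trans hroot1, hrel12.2.1, ht₁v, hrel12.2.2.1⟩

theorem pumping (g : ContextFreeGrammar.{0} T) :
    ∃ p : ℕ, 1 ≤ p ∧ ∀ z ∈ g.language, p ≤ z.length →
      ∃ U V W X Y : List T, z = U ++ V ++ W ++ X ++ Y ∧
        V.length + W.length + X.length ≤ p ∧ 1 ≤ V.length + X.length ∧
        U ++ W ++ Y ∈ g.language ∧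
        U ++ V ++ V ++ W ++ X ++ X ++ Y ∈ g.language := by
  classical
  refine ⟨M g ^ (Kof g + 1), Nat.one_le_pow _ _ (by simp [M]), ?_⟩
  intro z hz hlen
  have hM2 : 2 ≤ M g := by simp [M]
  -- a parse tree exists
  set P : PT T g.NT → Prop :=
    fun t => Valid g t ∧ root t = Symbol.nonterminal g.initial ∧ yield t = z with hP
  have hex : ∃ t, P t := by
    obtain ⟨t, h1, h2, h3⟩ := exists_tree ((g.mem_language_iff z).mp hz)
    exact ⟨t, h1, h2, h3⟩
  -- minimal parse tree
  obtain ⟨t, htP, hmin⟩ : ∃ t, P t ∧ ∀ t', P t' → size t ≤ size t' := by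
    have hn : ∃ n, ∃ t, P t ∧ size t = n := by
      obtain ⟨t, ht⟩ := hex; exact ⟨size t, t, ht, rfl⟩
    obtain ⟨t, htP, hts⟩ := Nat.find_spec hn
    refine ⟨t, htP, fun t' ht' => ?_⟩
    have := Nat.find_min' hn (m := size t') ⟨t', ht', rfl⟩
    omega
  obtain ⟨htv, htr, hty⟩ := htP
  -- the tree is tall
  have hht : Kof g + 1 ≤ height t := by
    by_contra hcon
    have h1 : (yield t).length ≤ M g ^ height t := yield_length_le htv
    have h2 : M g ^ height t ≤ M g ^ Kof g :=
      Nat.pow_le_pow_right (by omega) (by omega)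
    have h3 : M g ^ Kof g < M g ^ (Kof g + 1) :=
      Nat.pow_lt_pow_right (by omega) (by omega)
    rw [hty] at h1
    omega
  obtain ⟨s, U₀, Y₀, hsub0, hsv, hsh⟩ := descend (height t) t (Kof g) htv rfl hht
  obtain ⟨t₁, t₂, U₁, Y₁, V, X, A, hsub1, hsub2, hroot1, hroot2, hslt, ht₁v, ht₂v⟩ :=
    rep2 hsv hsh
  set W := yield t₂ with hW
  set U := U₀ ++ U₁ with hU
  set Y := Y₁ ++ Y₀ with hY
  have hsubT : SubAt g t t₁ U Y := subAt_trans hsub0 hsub1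
  have hy1 : yield t₁ = V ++ W ++ X := hsub2.1
  have hzeq : z = U ++ V ++ W ++ X ++ Y := by
    rw [← hty, hsubT.1, hy1]; simp
  have hvwx : V.length + W.length + X.length ≤ M g ^ (Kof g + 1) := by
    have h1 : (yield s).length ≤ M g ^ (Kof g + 1) := by
      have := yield_length_le hsv; rwa [hsh] at this
    have h2 := hsub1.1
    have := congrArg List.length h2
    simp [hy1] at this
    omega
  have hdown : ∃ t', Valid g t' ∧ root t' = Symbol.nonterminal g.initial ∧
      yield t' = U ++ W ++ Y ∧ size t' + size t₁ = size t + size t₂ := by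
    obtain ⟨t', h1, h2, h3, h4⟩ :=
      hsubT.2.2 t₂ (hroot2.trans hroot1.symm) ht₂v htv
    exact ⟨t', h1, htr ▸ h2, h3, h4⟩
  have hvx : 1 ≤ V.length + X.length := by
    by_contra hcon
    have hVnil : V = [] := by
      have : V.length = 0 := by omega
      simpa using this
    have hXnil : X = [] := by
      have : X.length = 0 := by omega
      simpa using this
    obtain ⟨t', h1, h2, h3, h4⟩ := hdown
    have hWy : W = yield t₁ := by rw [hy1, hVnil, hXnil]; simp
    have : P t' := ⟨h1, h2, by rw [h3, hzeq, hVnil, hXnil]; simp⟩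
    have := hmin t' this
    omega
  refine ⟨U, V, W, X, Y, hzeq, hvwx, hvx, ?_, ?_⟩
  · obtain ⟨t', h1, h2, h3, _⟩ := hdown
    rw [g.mem_language_iff]
    have := h1.derives
    rw [h2, h3] at this
    exact this
  · -- pump up
    obtain ⟨t₁', h1, h2, h3, _⟩ := hsub2.2.2 t₁ (hroot1.trans hroot2.symm) ht₁v ht₁v
    obtain ⟨t'', g1, g2, g3, _⟩ :=
      hsubT.2.2 t₁' h2 h1 htv
    rw [g.mem_language_iff]
    have := g1.derives
    rw [g2, htr, g3, h3, hy1] at this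
    simpa using this



/-- `n` zeros. -/
def r0 (n : ℕ) : List (Fin 2) := List.replicate n 0

/-- The word `0^n 1 0^j 1 0^k 1`. -/
def pat (n j k : ℕ) : List (Fin 2) := r0 n ++ 1 :: (r0 j ++ 1 :: (r0 k ++ [1]))

/-- Number of leading zeros. -/
def f1 : List (Fin 2) → ℕ
  | [] => 0
  | c :: s => if c = 1 then 0 else f1 s + 1

/-- Length of the longest prefix containing at most one `1`. -/
def f2 : List (Fin 2) → ℕ
  | [] => 0
  | c :: s => if c = 1 then f1 s + 1 else f2 s + 1

lemma shuffle_count {α : Type*} [DecidableEq α] {x y z : List α} (h : IsShuffle x y z) (c : α) :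
    z.count c = x.count c + y.count c := by
  induction h with
  | nil => simp
  | left a h ih => simp [List.count_cons, ih]; omega
  | right a h ih => simp [List.count_cons, ih]; omega

lemma shuffle_f1_min {x y z : List (Fin 2)} (h : IsShuffle x y z) :
    min (f1 x) (f1 y) ≤ f1 z := by
  induction h with
  | nil => simp
  | left a h ih =>
    by_cases ha : a = 1 <;> simp [f1, ha] <;> omega
  | right a h ih =>
    by_cases ha : a = 1 <;> simp [f1, ha] <;> omega

lemma shuffle_f1_add {x y z : List (Fin 2)} (h : IsShuffle x y z) :
    f1 z ≤ f1 x + f1 y := by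
  induction h with
  | nil => simp
  | left a h ih =>
    by_cases ha : a = 1 <;> simp [f1, ha] <;> omega
  | right a h ih =>
    by_cases ha : a = 1 <;> simp [f1, ha] <;> omega

lemma shuffle_f2_max {x y z : List (Fin 2)} (h : IsShuffle x y z) :
    f2 z ≤ max (f2 x + f1 y) (f1 x + f2 y) := by
  induction h with
  | nil => simp
  | left a h ih =>
    have h1 := shuffle_f1_add h
    by_cases ha : a = 1 <;> simp [f1, f2, ha] <;> omega
  | right a h ih =>
    have h1 := shuffle_f1_add h
    by_cases ha : a = 1 <;> simp [f1, f2, ha] <;> omega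

lemma shuffle_head {α : Type*} {x y z : List α} {c : α} {z' : List α}
    (h : IsShuffle x y z) (hz : z = c :: z') :
    (∃ x', x = c :: x') ∨ (∃ y', y = c :: y') := by
  cases h with
  | nil => simp at hz
  | left a h => exact Or.inl ⟨_, by rw [(List.cons_eq_cons.mp hz).1]⟩
  | right a h => exact Or.inr ⟨_, by rw [(List.cons_eq_cons.mp hz).1]⟩

lemma shuffle_snoc_left {α : Type*} {x y z : List α} (a : α) (h : IsShuffle x y z) :
    IsShuffle (x ++ [a]) y (z ++ [a]) := by
  induction h with
  | nil => exact .left a .nil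
  | left b h ih => exact .left b ih
  | right b h ih => exact .right b ih

lemma shuffle_snoc_right {α : Type*} {x y z : List α} (a : α) (h : IsShuffle x y z) :
    IsShuffle x (y ++ [a]) (z ++ [a]) := by
  induction h with
  | nil => exact .right a .nil
  | left b h ih => exact .left b ih
  | right b h ih => exact .right b ih

lemma shuffle_reverse {α : Type*} {x y z : List α} (h : IsShuffle x y z) :
    IsShuffle x.reverse y.reverse z.reverse := by
  induction h with
  | nil => exact .nil
  | left a h ih => simpa using shuffle_snoc_left a ih
  | right a h ih => simpa using shuffle_snoc_right a ih

lemma shuffle_nil_left {α : Type*} (y : List α) : IsShuffle [] y y := by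
  induction y with
  | nil => exact .nil
  | cons a y ih => exact .right a ih

lemma shuffle_append_self {α : Type*} (x y : List α) : IsShuffle x y (x ++ y) := by
  induction x with
  | nil => simpa using shuffle_nil_left y
  | cons a x ih => exact .left a ih

lemma shuffle_prepend {α : Type*} {x y z : List α} (p : List α) (h : IsShuffle x y z) :
    IsShuffle (p ++ x) y (p ++ z) := by
  induction p with
  | nil => simpa using h
  | cons a p ih => exact .left a ih

@[simp] lemma f1_r0_append (n : ℕ) (s : List (Fin 2)) : f1 (r0 n ++ 1 :: s) = n := by
  induction n with
  | zero => simp [r0, f1]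
  | succ n ih => simpa [r0, f1, List.replicate_succ] using ih

@[simp] lemma f1_r0 (n : ℕ) : f1 (r0 n) = n := by
  induction n with
  | zero => simp [r0, f1]
  | succ n ih => simpa [r0, f1, List.replicate_succ] using ih

@[simp] lemma f2_one_cons (s : List (Fin 2)) : f2 (1 :: s) = f1 s + 1 := by simp [f2]

@[simp] lemma count1_r0 (n : ℕ) : (r0 n).count 1 = 0 := by
  simp [r0, List.count_replicate]

@[simp] lemma count0_r0 (n : ℕ) : (r0 n).count 0 = n := by
  simp [r0, List.count_replicate]

@[simp] lemma length_r0 (n : ℕ) : (r0 n).length = n := by simp [r0]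

lemma count1_pat (n j k : ℕ) : (pat n j k).count 1 = 3 := by
  simp [pat, List.count_append, List.count_cons]

lemma count0_pat (n j k : ℕ) : (pat n j k).count 0 = n + j + k := by
  simp [pat, List.count_append, List.count_cons]; omega

lemma f1_pat (n j k : ℕ) : f1 (pat n j k) = n := by simp [pat]

lemma reverse_pat (n j k : ℕ) :
    (pat n j k).reverse = 1 :: (r0 k ++ 1 :: (r0 j ++ 1 :: r0 n)) := by
  simp [pat, r0, List.reverse_cons, List.reverse_append]

lemma all_zero_of_count1_eq_zero {w : List (Fin 2)} (h : w.count 1 = 0) :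
    w = r0 w.length := by
  apply List.eq_replicate_length.mpr
  intro b hb
  have hb1 : b ≠ 1 := by
    intro rfl'; subst rfl'
    exact absurd h (by simpa using (List.count_pos_iff.mpr hb).ne')
  omega

lemma one_one_struct {w : List (Fin 2)} (h : w.count 1 = 1) :
    ∃ a b, w = r0 a ++ 1 :: r0 b := by
  induction w with
  | nil => simp at h
  | cons c w ih =>
    by_cases hc : c = 1
    · subst hc
      have : w.count 1 = 0 := by simpa [List.count_cons] using h
      exact ⟨0, w.length, by simpa [r0] using all_zero_of_count1_eq_zero this⟩
    · have hc0 : c = 0 := by omega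
      subst hc0
      have : w.count 1 = 1 := by simpa [List.count_cons] using h
      obtain ⟨a, b, rfl⟩ := ih this
      exact ⟨a + 1, b, by simp [r0, List.replicate_succ]⟩

/-- The triple self-shuffle language. -/
def L : Set (List (Fin 2)) :=
  {z | ∃ w u : List (Fin 2), IsShuffle w w u ∧ IsShuffle u w z}

lemma count1_dvd_of_mem {z : List (Fin 2)} (hz : z ∈ L) : 3 ∣ z.count 1 := by
  obtain ⟨w, u, h1, h2⟩ := hz
  have c1 := shuffle_count h1 1
  have c2 := shuffle_count h2 1
  exact ⟨w.count 1, by omega⟩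

lemma r0_cons_one_eq_one_cons {b : ℕ} {s t : List (Fin 2)}
    (h : r0 b ++ 1 :: s = 1 :: t) : b = 0 := by
  cases b with
  | zero => rfl
  | succ b =>
    rw [r0, List.replicate_succ] at h
    have := (List.cons_eq_cons.mp h).1
    simp at this

lemma mem_shape {z : List (Fin 2)} (hL : z ∈ L) {n j k : ℕ} (hz : z = pat n j k) :
    ∃ a, n + j + k = 3 * a ∧ k ≤ a ∧ a ≤ n := by
  obtain ⟨w, u, h1, h2⟩ := hL
  have c1 := shuffle_count h1 (1 : Fin 2)
  have c2 := shuffle_count h2 (1 : Fin 2)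
  have cz1 : z.count 1 = 3 := by rw [hz]; exact count1_pat n j k
  have cw1 : w.count 1 = 1 := by omega
  obtain ⟨a, b, hw⟩ := one_one_struct cw1
  -- b = 0, via the first letter of the reversed word
  have h2r := shuffle_reverse h2
  have h1r := shuffle_reverse h1
  have hzrev : z.reverse = 1 :: (r0 k ++ 1 :: (r0 j ++ 1 :: r0 n)) := by
    rw [hz]; exact reverse_pat n j k
  have hwrev : w.reverse = r0 b ++ 1 :: r0 a := by
    rw [hw]; simp [r0, List.reverse_append]
  have hb : b = 0 := by
    rcases shuffle_head h2r hzrev with ⟨x', hx⟩ | ⟨y', hy⟩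
    · rcases shuffle_head h1r (by exact hx) with ⟨x2, hx2⟩ | ⟨y2, hy2⟩
      · exact r0_cons_one_eq_one_cons (hwrev ▸ hx2)
      · exact r0_cons_one_eq_one_cons (hwrev ▸ hy2)
    · exact r0_cons_one_eq_one_cons (hwrev ▸ hy)
  subst hb
  have hw' : w = r0 a ++ [1] := by simpa [r0] using hw
  -- a ≤ n
  have hf1w : f1 w = a := by rw [hw']; simpa using f1_r0_append a []
  have hf1u : a ≤ f1 u := by
    have := shuffle_f1_min h1; omega
  have hf1z : f1 z = n := by rw [hz]; exact f1_pat n j k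
  have han : a ≤ n := by
    have := shuffle_f1_min h2; omega
  -- k ≤ a
  have hwrev' : w.reverse = 1 :: r0 a := by rw [hwrev]; rfl
  have hf1wr : f1 w.reverse = 0 := by rw [hwrev']; simp [f1]
  have hf2wr : f2 w.reverse = a + 1 := by rw [hwrev']; simp
  have hf1ur : f1 u.reverse ≤ 0 := by
    have := shuffle_f1_add h1r; omega
  have hf2ur : f2 u.reverse ≤ a + 1 := by
    have := shuffle_f2_max h1r; omega
  have hf2zr : f2 z.reverse = k + 1 := by rw [hzrev]; simp
  have hka : k ≤ a := by
    have := shuffle_f2_max h2r; omega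
  -- counting zeros
  have c01 := shuffle_count h1 (0 : Fin 2)
  have c02 := shuffle_count h2 (0 : Fin 2)
  have cz0 : z.count 0 = n + j + k := by rw [hz]; exact count0_pat n j k
  have cw0 : w.count 0 = a := by rw [hw']; simp [List.count_append]
  exact ⟨a, by omega, hka, han⟩

lemma pat_mem (a : ℕ) : pat a a a ∈ L := by
  refine ⟨r0 a ++ [1], (r0 a ++ [1]) ++ (r0 a ++ [1]), shuffle_append_self _ _, ?_⟩
  have h := shuffle_prepend (r0 a ++ [1]) (shuffle_append_self (r0 a ++ [1]) (r0 a ++ [1]))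
  have hpat : pat a a a = (r0 a ++ [1]) ++ ((r0 a ++ [1]) ++ (r0 a ++ [1])) := by
    simp [pat]
  rw [hpat]
  exact h

lemma split {P Q R : List (Fin 2)} {n : ℕ} (h : P ++ Q = r0 n ++ 1 :: R) :
    (∃ c, c ≤ n ∧ P = r0 c ∧ Q = r0 (n - c) ++ 1 :: R) ∨
    (∃ P', P = r0 n ++ 1 :: P' ∧ P' ++ Q = R) := by
  rcases List.append_eq_append_iff.mp h with ⟨a', hc, hb⟩ | ⟨c', ha, hd⟩
  · left
    have hPz : P = r0 P.length := by
      apply List.eq_replicate_length.mpr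
      intro x hx
      have : x ∈ r0 n := by rw [hc]; exact List.mem_append_left _ hx
      exact List.eq_of_mem_replicate this
    have ha'z : a' = r0 a'.length := by
      apply List.eq_replicate_length.mpr
      intro x hx
      have : x ∈ r0 n := by rw [hc]; exact List.mem_append_right _ hx
      exact List.eq_of_mem_replicate this
    have hlen : P.length + a'.length = n := by
      have := congrArg List.length hc; simp at this; omega
    refine ⟨P.length, by omega, hPz, ?_⟩
    rw [hb, ha'z]
    congr 1
    congr 1
    omega
  · rcases c' with _ | ⟨e, c''⟩
    · left
      refine ⟨n, le_refl n, by simpa using ha, ?_⟩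
      simpa [r0] using hd.symm
    · right
      have he : e = 1 := ((List.cons_eq_cons.mp hd).1).symm
      refine ⟨c'', by rw [ha, he], ((List.cons_eq_cons.mp hd).2).symm⟩

lemma prefix_zeros {S Q R : List (Fin 2)} {m : ℕ}
    (h : S ++ Q = r0 m ++ 1 :: R) (hlen : S.length ≤ m) :
    ∃ c, c ≤ m ∧ S = r0 c := by
  rcases split h with ⟨c, hc, hS, _⟩ | ⟨S', hS, _⟩
  · exact ⟨c, hc, hS⟩
  · exfalso
    have := congrArg List.length hS
    simp at this
    omega

lemma substring_ones {a : ℕ} {P S Q : List (Fin 2)}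
    (h : P ++ S ++ Q = pat a a a) (hlen : S.length ≤ a) :
    S.count 1 ≤ 1 := by
  have h' : P ++ (S ++ Q) = r0 a ++ 1 :: (r0 a ++ 1 :: (r0 a ++ [1])) := by
    rw [← List.append_assoc, h, pat]
  rcases split h' with ⟨c, hc, hP, hQ⟩ | ⟨P', hP, hP'⟩
  · rcases split hQ with ⟨d, hd, hS, _⟩ | ⟨S', hS, hS'⟩
    · simp [hS]
    · have hl := congrArg List.length hS
      simp at hl
      obtain ⟨e, he, hS'e⟩ := prefix_zeros hS' (by omega)
      rw [hS, hS'e]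
      simp [List.count_append, List.count_cons]
  · rcases split hP' with ⟨c, hc, hP2, hQ⟩ | ⟨P'', hP2, hP''⟩
    · rcases split hQ with ⟨d, hd, hS, _⟩ | ⟨S', hS, hS'⟩
      · simp [hS]
      · have hl := congrArg List.length hS
        simp at hl
        have hS'2 : S' ++ Q = r0 a ++ 1 :: [] := by simpa using hS'
        obtain ⟨e, he, hS'e⟩ := prefix_zeros hS'2 (by omega)
        rw [hS, hS'e]
        simp [List.count_append, List.count_cons]
    · have hP''2 : P'' ++ (S ++ Q) = r0 a ++ 1 :: [] := by simpa using hP''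
      rcases split hP''2 with ⟨c, hc, hP3, hQ⟩ | ⟨P''', hP3, hP'''⟩
      · rcases split hQ with ⟨d, hd, hS, _⟩ | ⟨S', hS, hS'⟩
        · simp [hS]
        · have hS'nil : S' = [] ∧ Q = [] := by
            constructor <;> [exact List.append_eq_nil_iff.mp hS' |>.1;
              exact List.append_eq_nil_iff.mp hS' |>.2]
          rw [hS, hS'nil.1]
          simp [List.count_append, List.count_cons]
      · have : S = [] := by
          have := List.append_eq_nil_iff.mp hP''' |>.2
          exact List.append_eq_nil_iff.mp this |>.1
        simp [this]

@[simp] lemma r0_append (m n : ℕ) (s : List (Fin 2)) :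
    r0 m ++ (r0 n ++ s) = r0 (m + n) ++ s := by
  rw [← List.append_assoc]
  show List.replicate m (0 : Fin 2) ++ List.replicate n 0 ++ s = List.replicate (m + n) 0 ++ s
  rw [← List.replicate_add, Nat.add_comm]

lemma pat_canon {n j k n' j' k' : ℕ} (h1 : n = n') (h2 : j = j') (h3 : k = k') :
    r0 n ++ 1 :: (r0 j ++ 1 :: (r0 k ++ [1])) = pat n' j' k' := by
  subst h1; subst h2; subst h3; rfl

lemma r0_split {v n : ℕ} {Q R : List (Fin 2)} (h : r0 v ++ Q = r0 n ++ 1 :: R) :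
    v ≤ n ∧ Q = r0 (n - v) ++ 1 :: R := by
  rcases split h with ⟨c, hc, hvc, hQ⟩ | ⟨P', hP, _⟩
  · have : v = c := by simpa using congrArg List.length hvc
    subst this
    exact ⟨hc, hQ⟩
  · exfalso
    have := congrArg (List.count 1) hP
    simp [List.count_append, List.count_cons] at this

lemma leaves {a : ℕ} {U V W X Y : List (Fin 2)}
    (h : U ++ V ++ W ++ X ++ Y = pat a a a)
    (hV : V.count 1 = 0) (hX : X.count 1 = 0) :
    ∃ d1 d2 d3, d1 + d2 + d3 = V.length + X.length ∧
      (d1 = 0 ∨ d2 = 0 ∨ d3 = 0) ∧ d1 ≤ a ∧ d2 ≤ a ∧ d3 ≤ a ∧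
      U ++ W ++ Y = pat (a - d1) (a - d2) (a - d3) ∧
      U ++ V ++ V ++ W ++ X ++ X ++ Y = pat (a + d1) (a + d2) (a + d3) := by
  have hVr : V = r0 V.length := all_zero_of_count1_eq_zero hV
  have hXr : X = r0 X.length := all_zero_of_count1_eq_zero hX
  set v := V.length with hv
  set x := X.length with hx
  have h' : U ++ (V ++ (W ++ (X ++ Y))) = r0 a ++ 1 :: (r0 a ++ 1 :: (r0 a ++ [1])) := by
    rw [show U ++ (V ++ (W ++ (X ++ Y))) = U ++ V ++ W ++ X ++ Y by simp, h, pat]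
  clear h hV hX
  rcases split h' with ⟨c, hc, hU, h1⟩ | ⟨U', hU, h1⟩
  · -- U in block 1
    rw [hVr] at h1
    obtain ⟨hvle, h2⟩ := r0_split h1
    rcases split h2 with ⟨d, hd, hW, h3⟩ | ⟨W', hW, h3⟩
    · -- W in block 1
      rw [hXr] at h3
      obtain ⟨hxle, h4⟩ := r0_split h3
      refine ⟨v + x, 0, 0, by omega, by omega, by omega, by omega, by omega, ?_, ?_⟩
      · rw [hU, hW, h4]
        simp only [List.append_assoc, List.cons_append, List.nil_append, r0_append]
        exact pat_canon (by omega) (by omega) (by omega)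
      · rw [hU, hW, h4, hVr, hXr]
        simp only [List.append_assoc, List.cons_append, List.nil_append, r0_append]
        exact pat_canon (by omega) (by omega) (by omega)
    · -- W crosses the first 1
      rcases split h3 with ⟨d, hd, hW', h4⟩ | ⟨W'', hW', h4⟩
      · -- W ends in block 2
        rw [hXr] at h4
        obtain ⟨hxle, h5⟩ := r0_split h4
        refine ⟨v, x, 0, by omega, by omega, by omega, by omega, by omega, ?_, ?_⟩
        · rw [hU, hW, hW', h5]
          simp only [List.append_assoc, List.cons_append, List.nil_append, r0_append]
          exact pat_canon (by omega) (by omega) (by omega)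
        · rw [hU, hW, hW', h5, hVr, hXr]
          simp only [List.append_assoc, List.cons_append, List.nil_append, r0_append]
          exact pat_canon (by omega) (by omega) (by omega)
      · -- W crosses the second 1
        have h4' : W'' ++ (X ++ Y) = r0 a ++ 1 :: [] := by simpa using h4
        rcases split h4' with ⟨d, hd, hW'', h5⟩ | ⟨W''', hW'', h5⟩
        · -- W ends in block 3
          rw [hXr] at h5
          obtain ⟨hxle, h6⟩ := r0_split h5
          refine ⟨v, 0, x, by omega, by omega, by omega, by omega, by omega, ?_, ?_⟩
          · rw [hU, hW, hW', hW'', h6]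
            simp only [List.append_assoc, List.cons_append, List.nil_append, r0_append]
            exact pat_canon (by omega) (by omega) (by omega)
          · rw [hU, hW, hW', hW'', h6, hVr, hXr]
            simp only [List.append_assoc, List.cons_append, List.nil_append, r0_append]
            exact pat_canon (by omega) (by omega) (by omega)
        · -- W contains the last 1: X and Y empty
          obtain ⟨hW'''nil, hXYnil⟩ := List.append_eq_nil_iff.mp h5
          obtain ⟨hXnil, hYnil⟩ := List.append_eq_nil_iff.mp hXYnil
          have hx0 : x = 0 := by rw [hx, hXnil]; rfl
          refine ⟨v, 0, 0, by omega, by omega, by omega, by omega, by omega, ?_, ?_⟩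
          · rw [hU, hW, hW', hW'', hW'''nil, hYnil]
            simp only [List.append_assoc, List.cons_append, List.nil_append,
              List.append_nil, r0_append]
            exact pat_canon (by omega) (by omega) (by omega)
          · rw [hU, hW, hW', hW'', hW'''nil, hYnil, hVr, hXnil]
            simp only [List.append_assoc, List.cons_append, List.nil_append,
              List.append_nil, r0_append]
            exact pat_canon (by omega) (by omega) (by omega)
  · -- U crosses the first 1
    rcases split h1 with ⟨c, hc, hU', h2⟩ | ⟨U'', hU', h2⟩
    · -- U ends in block 2
      rw [hVr] at h2
      obtain ⟨hvle, h3⟩ := r0_split h2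
      rcases split h3 with ⟨d, hd, hW, h4⟩ | ⟨W', hW, h4⟩
      · -- W in block 2
        rw [hXr] at h4
        obtain ⟨hxle, h5⟩ := r0_split h4
        refine ⟨0, v + x, 0, by omega, by omega, by omega, by omega, by omega, ?_, ?_⟩
        · rw [hU, hU', hW, h5]
          simp only [List.append_assoc, List.cons_append, List.nil_append, r0_append]
          exact pat_canon (by omega) (by omega) (by omega)
        · rw [hU, hU', hW, h5, hVr, hXr]
          simp only [List.append_assoc, List.cons_append, List.nil_append, r0_append]
          exact pat_canon (by omega) (by omega) (by omega)
      · -- W crosses the second 1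
        have h4' : W' ++ (X ++ Y) = r0 a ++ 1 :: [] := by simpa using h4
        rcases split h4' with ⟨d, hd, hW', h5⟩ | ⟨W'', hW', h5⟩
        · -- W ends in block 3
          rw [hXr] at h5
          obtain ⟨hxle, h6⟩ := r0_split h5
          refine ⟨0, v, x, by omega, by omega, by omega, by omega, by omega, ?_, ?_⟩
          · rw [hU, hU', hW, hW', h6]
            simp only [List.append_assoc, List.cons_append, List.nil_append, r0_append]
            exact pat_canon (by omega) (by omega) (by omega)
          · rw [hU, hU', hW, hW', h6, hVr, hXr]
            simp only [List.append_assoc, List.cons_append, List.nil_append, r0_append]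
            exact pat_canon (by omega) (by omega) (by omega)
        · -- W contains the last 1: X and Y empty
          obtain ⟨hW''nil, hXYnil⟩ := List.append_eq_nil_iff.mp h5
          obtain ⟨hXnil, hYnil⟩ := List.append_eq_nil_iff.mp hXYnil
          have hx0 : x = 0 := by rw [hx, hXnil]; rfl
          refine ⟨0, v, 0, by omega, by omega, by omega, by omega, by omega, ?_, ?_⟩
          · rw [hU, hU', hW, hW', hW''nil, hYnil]
            simp only [List.append_assoc, List.cons_append, List.nil_append,
              List.append_nil, r0_append]
            exact pat_canon (by omega) (by omega) (by omega)
          · rw [hU, hU', hW, hW', hW''nil, hYnil, hVr, hXnil]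
            simp only [List.append_assoc, List.cons_append, List.nil_append,
              List.append_nil, r0_append]
            exact pat_canon (by omega) (by omega) (by omega)
    · -- U crosses the second 1
      have h2' : U'' ++ (V ++ (W ++ (X ++ Y))) = r0 a ++ 1 :: [] := by simpa using h2
      rcases split h2' with ⟨c, hc, hU'', h3⟩ | ⟨U''', hU'', h3⟩
      · -- U ends in block 3
        rw [hVr] at h3
        obtain ⟨hvle, h4⟩ := r0_split h3
        rcases split h4 with ⟨d, hd, hW, h5⟩ | ⟨W', hW, h5⟩
        · -- W in block 3
          rw [hXr] at h5
          obtain ⟨hxle, h6⟩ := r0_split h5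
          refine ⟨0, 0, v + x, by omega, by omega, by omega, by omega, by omega, ?_, ?_⟩
          · rw [hU, hU', hU'', hW, h6]
            simp only [List.append_assoc, List.cons_append, List.nil_append, r0_append]
            exact pat_canon (by omega) (by omega) (by omega)
          · rw [hU, hU', hU'', hW, h6, hVr, hXr]
            simp only [List.append_assoc, List.cons_append, List.nil_append, r0_append]
            exact pat_canon (by omega) (by omega) (by omega)
        · -- W contains the last 1: X and Y empty
          obtain ⟨hW'nil, hXYnil⟩ := List.append_eq_nil_iff.mp h5
          obtain ⟨hXnil, hYnil⟩ := List.append_eq_nil_iff.mp hXYnil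
          have hx0 : x = 0 := by rw [hx, hXnil]; rfl
          refine ⟨0, 0, v, by omega, by omega, by omega, by omega, by omega, ?_, ?_⟩
          · rw [hU, hU', hU'', hW, hW'nil, hYnil]
            simp only [List.append_assoc, List.cons_append, List.nil_append,
              List.append_nil, r0_append]
            exact pat_canon (by omega) (by omega) (by omega)
          · rw [hU, hU', hU'', hW, hW'nil, hYnil, hVr, hXnil]
            simp only [List.append_assoc, List.cons_append, List.nil_append,
              List.append_nil, r0_append]
            exact pat_canon (by omega) (by omega) (by omega)
      · -- U contains the last 1: V, W, X, Y all empty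
        obtain ⟨hU'''nil, hrest⟩ := List.append_eq_nil_iff.mp h3
        obtain ⟨hVnil, hrest2⟩ := List.append_eq_nil_iff.mp hrest
        obtain ⟨hWnil, hrest3⟩ := List.append_eq_nil_iff.mp hrest2
        obtain ⟨hXnil, hYnil⟩ := List.append_eq_nil_iff.mp hrest3
        have hv0 : v = 0 := by rw [hv, hVnil]; rfl
        have hx0 : x = 0 := by rw [hx, hXnil]; rfl
        refine ⟨0, 0, 0, by omega, by omega, by omega, by omega, by omega, ?_, ?_⟩
        · rw [hU, hU', hU'', hU'''nil, hWnil, hYnil]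
          simp only [List.append_assoc, List.cons_append, List.nil_append,
            List.append_nil, r0_append]
          exact pat_canon (by omega) (by omega) (by omega)
        · rw [hU, hU', hU'', hU'''nil, hVnil, hWnil, hXnil, hYnil]
          simp only [List.append_assoc, List.cons_append, List.nil_append,
            List.append_nil, r0_append]
          exact pat_canon (by omega) (by omega) (by omega)


end TSS

open TSS in
/-- The triple self-shuffle ⋃_{w ∈ {0,1}*} (w ∐ w ∐ w) is not context-free. -/
theorem tripleSelfShuffle_not_contextFree :
    ¬ Language.IsContextFree
      {z : List (Fin 2) | ∃ w u : List (Fin 2), IsShuffle w w u ∧ IsShuffle u w z} := by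
  rintro ⟨g, hg⟩
  obtain ⟨p, hp1, hpump⟩ := TSS.pumping g
  set a := p with ha
  have hmem : pat a a a ∈ g.language := by
    rw [hg]; exact pat_mem a
  have hlenz : p ≤ (pat a a a).length := by
    simp [pat, r0]; omega
  obtain ⟨U, V, W, X, Y, hz, hlen3, hvx, hdown, hup⟩ := hpump _ hmem hlenz
  have h : U ++ V ++ W ++ X ++ Y = pat a a a := hz.symm
  have hones : (V ++ W ++ X).count 1 ≤ 1 := by
    apply substring_ones (P := U) (Q := Y) (a := a)
    · rw [← h]; simp
    · have : (V ++ W ++ X).length = V.length + W.length + X.length := by simp; omega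
      omega
  have hdownL : U ++ W ++ Y ∈ L := by
    have h2 := hdown; rw [hg] at h2; exact h2
  have hupL : U ++ V ++ V ++ W ++ X ++ X ++ Y ∈ L := by
    have h2 := hup; rw [hg] at h2; exact h2
  have htot : U.count 1 + V.count 1 + W.count 1 + X.count 1 + Y.count 1 = 3 := by
    have h2 := congrArg (List.count 1) h
    simp [List.count_append, count1_pat] at h2
    omega
  by_cases hcase : V.count 1 = 0 ∧ X.count 1 = 0
  · obtain ⟨d1, d2, d3, hsum, hzero, h1a, h2a, h3a, hdowneq, hupeq⟩ := leaves h hcase.1 hcase.2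
    obtain ⟨a₀, hs0, hk0, hn0⟩ := mem_shape hdownL hdowneq
    obtain ⟨a₂, hs2, hk2, hn2⟩ := mem_shape hupL hupeq
    omega
  · have hVXge : 1 ≤ V.count 1 + X.count 1 := by
      rcases Decidable.not_and_iff_or_not.mp hcase with hne | hne <;> omega
    have hVXle : V.count 1 + X.count 1 ≤ 1 := by
      have : (V ++ W ++ X).count 1 = V.count 1 + W.count 1 + X.count 1 := by
        simp [List.count_append]; omega
      omega
    obtain ⟨m, hm⟩ := count1_dvd_of_mem hdownL
    have : (U ++ W ++ Y).count 1 = U.count 1 + W.count 1 + Y.count 1 := by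
      simp [List.count_append]; omega
    omega
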